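/- Let $N \geq 2$, $K \geq 1$ be integers and $0 \leq r \leq 1$. Define the region $\mathcal{R} = \{(r_1,\ldots,r_K) : 0 \leq r_k \leq 1 \text{ for all } k, \ N\sum_{k=1}^{K-1} r_k + (N-1) r_K \leq NKr\}$ and the objective $l(\mathbf{r}) = K - \sum_{k=1}^K r_k$. Then $\min_{\mathbf{r} \in \mathcal{R}} l(\mathbf{r}) = \max\{0,\ K(1-r) - 1/N,\ K(1-r) - Kr/(N-1)\}$. -/

import Mathlib

/-!
Only two numbers matter in a feasible vector: the sum `s` of the first `K - 1` coordinates and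
the last coordinate `t`. Spreading `s` evenly shows that every `s ∈ [0, K - 1]` occurs, so the
problem is the planar LP of maximising `s + t` over `0 ≤ s ≤ K - 1`, `0 ≤ t ≤ 1`,
`N s + (N - 1) t ≤ N K r`. Its optimum is `min (K, NKr / (N - 1), (NKr + 1) / N)`: each bound
is a valid inequality (the last two are the budget constraint plus `0 ≤ s`, resp. `t ≤ 1`), and
the vertex `(0, NKr / (N - 1))`, `((NKr - N + 1) / N, 1)` or `(K - 1, 1)` attains the smallest.
-/

open Finset

def twoBlockTotals (m a b B : ℝ) : Set ℝ :=
  {T | ∃ s t, (0 ≤ s ∧ s ≤ m) ∧ (0 ≤ t ∧ t ≤ 1) ∧ a * s + b * t ≤ B ∧ T = s + t}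

theorem le_min_of_mem_twoBlockTotals {m a b B T : ℝ} (hb : 0 < b) (hba : b ≤ a)
    (hT : T ∈ twoBlockTotals m a b B) : T ≤ min (m + 1) (min (B / b) ((B + (a - b)) / a)) := by
  obtain ⟨s, t, ⟨hs0, hsm⟩, ⟨ht0, ht1⟩, hbudget, rfl⟩ := hT
  refine le_min (by linarith) (le_min ?_ ?_)
  · rw [le_div_iff₀ hb]; nlinarith
  · rw [le_div_iff₀ (by linarith)]; nlinarith

theorem exists_mem_twoBlockTotals_min_le {m a b B : ℝ} (hm : 0 ≤ m) (hb : 0 < b) (hba : b ≤ a)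
    (hB : 0 ≤ B) :
    ∃ T ∈ twoBlockTotals m a b B, min (m + 1) (min (B / b) ((B + (a - b)) / a)) ≤ T := by
  have ha : 0 < a := hb.trans_le hba
  rcases le_or_gt B b with hBb | hbB
  · refine ⟨0 + B / b, ⟨0, B / b, ⟨le_rfl, hm⟩, ⟨by positivity, (div_le_one hb).2 hBb⟩,
      ?_, rfl⟩, ?_⟩
    · rw [mul_div_cancel₀ _ hb.ne']; linarith
    · rw [zero_add]; exact min_le_of_right_le (min_le_left _ _)
  rcases le_or_gt B (a * m + b) with hBm | hmB
  · refine ⟨(B - b) / a + 1, ⟨(B - b) / a, 1, ⟨by rw [le_div_iff₀ ha]; linarith,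
      by rw [div_le_iff₀ ha]; linarith⟩, ⟨zero_le_one, le_rfl⟩, ?_, rfl⟩, ?_⟩
    · rw [mul_div_cancel₀ _ ha.ne']; linarith
    · refine min_le_of_right_le (min_le_of_right_le (le_of_eq ?_))
      field_simp; ring
  · exact ⟨m + 1, ⟨m, 1, ⟨hm, le_rfl⟩, ⟨zero_le_one, le_rfl⟩, by linarith, rfl⟩, min_le_left _ _⟩

theorem isGreatest_twoBlockTotals {m a b B : ℝ} (hm : 0 ≤ m) (hb : 0 < b) (hba : b ≤ a)
    (hB : 0 ≤ B) :
    IsGreatest (twoBlockTotals m a b B) (min (m + 1) (min (B / b) ((B + (a - b)) / a))) := by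
  obtain ⟨T, hT, hle⟩ := exists_mem_twoBlockTotals_min_le hm hb hba hB
  have hupper : ∀ T' ∈ twoBlockTotals m a b B, T' ≤ _ :=
    fun _ hT' => le_min_of_mem_twoBlockTotals hb hba hT'
  exact ⟨le_antisymm (hupper T hT) hle ▸ hT, hupper⟩

theorem exists_sum_eq_of_le_card {ι : Type*} (s : Finset ι) {σ : ℝ} (h0 : 0 ≤ σ)
    (hσ : σ ≤ #s) : ∃ w : ι → ℝ, (∀ k, 0 ≤ w k ∧ w k ≤ 1) ∧ ∑ k ∈ s, w k = σ := by
  refine ⟨fun _ => σ / #s, fun _ => ⟨by positivity, div_le_one_of_le₀ hσ (Nat.cast_nonneg _)⟩, ?_⟩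
  rcases s.eq_empty_or_nonempty with rfl | hs
  · simpa using (le_antisymm hσ (by simpa using h0)).symm
  · rw [sum_const, nsmul_eq_mul, mul_div_cancel₀ _ (by exact_mod_cast hs.card_pos.ne')]

section WeightedBox

variable {ι : Type*} [Fintype ι] [DecidableEq ι]

theorem sum_mem_twoBlockTotals_iff (i₀ : ι) (a b B T : ℝ) :
    (∃ v : ι → ℝ, (∀ k, 0 ≤ v k ∧ v k ≤ 1) ∧
      a * ∑ k ∈ univ.erase i₀, v k + b * v i₀ ≤ B ∧ T = ∑ k, v k) ↔
    T ∈ twoBlockTotals (Fintype.card ι - 1) a b B := by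
  have hcard : ((univ.erase i₀).card : ℝ) = Fintype.card ι - 1 := by
    rw [card_erase_of_mem (mem_univ i₀), card_univ, Nat.cast_sub (Fintype.card_pos_iff.2 ⟨i₀⟩),
      Nat.cast_one]
  constructor
  · rintro ⟨v, hv, hbudget, rfl⟩
    refine ⟨_, v i₀, ⟨sum_nonneg fun k _ => (hv k).1, ?_⟩, hv i₀, hbudget,
      (sum_erase_add _ _ (mem_univ i₀)).symm⟩
    calc ∑ k ∈ univ.erase i₀, v k ≤ (univ.erase i₀).card • (1 : ℝ) :=
          sum_le_card_nsmul _ v 1 fun k _ => (hv k).2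
      _ = Fintype.card ι - 1 := by rw [nsmul_eq_mul, mul_one, hcard]
  · rintro ⟨s, t, ⟨hs0, hsm⟩, ht, hbudget, rfl⟩
    obtain ⟨w, hw, hws⟩ := exists_sum_eq_of_le_card (univ.erase i₀) hs0 (hcard ▸ hsm)
    have hrest : ∑ k ∈ univ.erase i₀, Function.update w i₀ t k = s := by
      rw [sum_update_of_notMem (notMem_erase i₀ univ), hws]
    refine ⟨Function.update w i₀ t, fun k => ?_, ?_, ?_⟩
    · rcases eq_or_ne k i₀ with rfl | hk
      · simpa using ht
      · simpa [hk] using hw k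
    · simpa [hrest] using hbudget
    · rw [← sum_erase_add _ _ (mem_univ i₀), hrest, Function.update_self]

theorem isLeast_card_sub_sum (i₀ : ι) {a b B : ℝ} (hb : 0 < b) (hba : b ≤ a) (hB : 0 ≤ B) :
    IsLeast {x : ℝ | ∃ v : ι → ℝ, (∀ k, 0 ≤ v k ∧ v k ≤ 1) ∧
        a * ∑ k ∈ univ.erase i₀, v k + b * v i₀ ≤ B ∧ x = Fintype.card ι - ∑ k, v k}
      (Fintype.card ι - min (Fintype.card ι : ℝ) (min (B / b) ((B + (a - b)) / a))) := by
  have hm : (0 : ℝ) ≤ Fintype.card ι - 1 := by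
    rw [sub_nonneg, Nat.one_le_cast]; exact Fintype.card_pos_iff.2 ⟨i₀⟩
  have himage : {x : ℝ | ∃ v : ι → ℝ, (∀ k, 0 ≤ v k ∧ v k ≤ 1) ∧
        a * ∑ k ∈ univ.erase i₀, v k + b * v i₀ ≤ B ∧ x = Fintype.card ι - ∑ k, v k} =
      (fun T => (Fintype.card ι : ℝ) - T) '' twoBlockTotals (Fintype.card ι - 1) a b B := by
    ext x
    simp only [Set.mem_ofPred_eq, Set.mem_image, ← sum_mem_twoBlockTotals_iff i₀]
    constructor
    · rintro ⟨v, hv, hbudget, rfl⟩; exact ⟨_, ⟨v, hv, hbudget, rfl⟩, rfl⟩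
    · rintro ⟨_, ⟨v, hv, hbudget, rfl⟩, rfl⟩; exact ⟨v, hv, hbudget, rfl⟩
  rw [himage]
  have hanti : Antitone fun T => (Fintype.card ι : ℝ) - T := fun _ _ h => sub_le_sub_left h _
  simpa using hanti.map_isGreatest (isGreatest_twoBlockTotals hm hb hba hB)

end WeightedBox

theorem stmt0 (N K : ℕ) (hN : 2 ≤ N) (hK : 1 ≤ K) (r : ℝ) (hr0 : 0 ≤ r) :
    IsLeast
      {x : ℝ | ∃ v : Fin K → ℝ,
        (∀ k, 0 ≤ v k ∧ v k ≤ 1) ∧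
        (N : ℝ) * (∑ k ∈ Finset.univ.erase (⟨K - 1, by omega⟩ : Fin K), v k) +
          ((N : ℝ) - 1) * v ⟨K - 1, by omega⟩ ≤ (N : ℝ) * K * r ∧
        x = (K : ℝ) - ∑ k, v k}
      (max 0 (max ((K : ℝ) * (1 - r) - 1 / N) ((K : ℝ) * (1 - r) - (K : ℝ) * r / ((N : ℝ) - 1)))) := by
  have hN1 : (0 : ℝ) < N - 1 := by
    rw [sub_pos, Nat.one_lt_cast]; omega
  have h := isLeast_card_sub_sum (⟨K - 1, by omega⟩ : Fin K) hN1 (sub_le_self _ zero_le_one)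
    (by positivity : (0 : ℝ) ≤ N * K * r)
  rw [Fintype.card_fin] at h
  convert h using 1
  rw [← max_sub_sub_left, ← max_sub_sub_left, sub_self, max_comm (_ - _ / _)]
  congr 2
  · field_simp; ring
  · field_simp; ring
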